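/- arXiv:1304.3281 — 2 statements merged into one kernel-verified Lean document; each statement's English description precedes it below -/
import Mathlib

section
/- Let $G_k$ be the free product of $k+1$ cyclic groups of order 2 with $k \geq 1$. For every even positive integer $n$, there exists a normal subgroup of $G_k$ of index exactly $n$. -/
/-- Relations making every generator an involution. -/
def sqRels (α : Type) : Set (FreeGroup α) :=
  Set.range (fun i => FreeGroup.of i * FreeGroup.of i)

/-- Free product of copies of ℤ/2 indexed by `α`. -/
abbrev FP2 (α : Type) := PresentedGroup (sqRels α)

/-- `G_k`: free product of `k+1` cyclic groups of order 2. -/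
abbrev Gk (k : ℕ) := FP2 (Fin (k + 1))

/-- The generators `a_i`. -/
def gen {α : Type} (i : α) : FP2 α := PresentedGroup.of i

lemma gen_mul_self {α : Type} (i : α) : gen i * gen i = 1 := by
  have h : (FreeGroup.of i * FreeGroup.of i) ∈ Subgroup.normalClosure (sqRels α) :=
    Subgroup.subset_normalClosure ⟨i, rfl⟩
  exact (QuotientGroup.eq_one_iff _).mpr h

lemma lift_sqRels {α : Type} {G : Type*} [Group G] (f : α → G)
    (hf : ∀ i, f i * f i = 1) : ∀ r ∈ sqRels α, FreeGroup.lift f r = 1 := by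
  rintro r ⟨i, rfl⟩
  simpa using hf i

/-! If `a_i ≠ a_j` are two of the generators, sending `a_j` to the reflection `sr 1`
and every other generator to `sr 0` defines a surjection of `G_k` onto the dihedral group of
order `2m`, since `sr 0 * sr 1` is the rotation `r 1`. Its kernel is normal of index `2m`. -/

lemma Subgroup.exists_normal_index_eq_card_of_surjective {G Q : Type*} [Group G] [Group Q]
    {f : G →* Q} (hf : Function.Surjective f) :
    ∃ H : Subgroup G, H.Normal ∧ H.index = Nat.card Q :=
  ⟨f.ker, f.normal_ker, by
    rw [Subgroup.index_ker, f.range_eq_top_of_surjective hf, Subgroup.card_top]⟩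

namespace DihedralGroup

lemma eq_top_of_sr_zero_mem_of_sr_one_mem {n : ℕ} {H : Subgroup (DihedralGroup n)}
    (h₀ : sr 0 ∈ H) (h₁ : sr 1 ∈ H) : H = ⊤ := by
  have hr : ∀ j : ZMod n, r j ∈ H := fun j => by
    have h : r 1 ∈ H := by simpa [sr_mul_sr] using H.mul_mem h₀ h₁
    simpa [r_one_zpow, ZMod.intCast_zmod_cast] using H.zpow_mem h (ZMod.cast j : ℤ)
  refine eq_top_iff.mpr fun x _ => ?_
  cases x with
  | r j => exact hr j
  | sr j => simpa [r_mul_sr] using H.mul_mem (hr (-j)) h₀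

end DihedralGroup

namespace FP2

variable {α : Type} {G : Type*} [Group G]

def lift (f : α → G) (hf : ∀ i, f i * f i = 1) : FP2 α →* G :=
  PresentedGroup.toGroup (lift_sqRels f hf)

@[simp]
lemma lift_gen (f : α → G) (hf : ∀ i, f i * f i = 1) (i : α) : lift f hf (gen i) = f i :=
  PresentedGroup.toGroup.of _

open DihedralGroup in
lemma exists_surjective_dihedralGroup {i j : α} (hij : i ≠ j) (m : ℕ) :
    ∃ f : FP2 α →* DihedralGroup m, Function.Surjective f := by
  classical
  let g : α → DihedralGroup m := fun x => sr (if x = j then 1 else 0)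
  have hg : ∀ x, g x * g x = 1 := fun _ => sr_mul_self _
  refine ⟨lift g hg, MonoidHom.range_eq_top.mp (eq_top_of_sr_zero_mem_of_sr_one_mem ?_ ?_)⟩
  · exact ⟨gen i, by simp [g, hij]⟩
  · exact ⟨gen j, by simp [g]⟩

end FP2

theorem stmt4_general (k : ℕ) (hk : 1 ≤ k) (n : ℕ) (heven : Even n) :
    ∃ H : Subgroup (Gk k), H.Normal ∧ H.index = n := by
  obtain ⟨m, rfl⟩ := heven
  have h01 : (0 : Fin (k + 1)) ≠ ⟨1, by omega⟩ := by simp [Fin.ext_iff]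
  obtain ⟨f, hf⟩ := FP2.exists_surjective_dihedralGroup h01 m
  rw [← two_mul, ← DihedralGroup.nat_card]
  exact Subgroup.exists_normal_index_eq_card_of_surjective hf

/-- for every even positive integer `n`, `G_k` (`k ≥ 1`) has a normal
subgroup of index exactly `n`. -/
theorem stmt4 (k : ℕ) (hk : 1 ≤ k) (n : ℕ) (hn : 0 < n) (heven : Even n) :
    ∃ H : Subgroup (Gk k), H.Normal ∧ H.index = n :=
  stmt4_general k hk n heven
end

section
/- Let $K$ be a normal subgroup of $G_k$ of finite index $r$ with cosets $K_1,\dots,K_r$ and let $q_{ij} = |S(x) \cap K_j|$ for $x \in K_i$ (well-defined). Given a $K$-periodic potential $v$ with values $v_1,\dots,v_r$, $\epsilon \in \mathbb{R}$, and $E \in \mathbb{C}$, there exists a nonzero $K$-periodic function $\varphi : G_k \to \mathbb{C}$ satisfying the Schrödinger equation $\sum_{y \in S(x)} \varphi(y) = (E - \epsilon v(x))\varphi(x)$ for all $x \in G_k$ if and only if the $r \times r$ matrix $M$ with entries $M_{ij} = q_{ij} - \delta_{ij}(E - \epsilon v_i)$ has determinant zero. -/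
/-- `q K c d` = number of generators `a_i` with `c ⋅ a_i = d` in the quotient; equivalently,
for any `x` in the coset `c`, the number of neighbors of `x` lying in the coset `d`. -/
noncomputable def q (k : ℕ) (K : Subgroup (Gk k)) [K.Normal] (c d : Gk k ⧸ K) : ℕ :=
  {i : Fin (k + 1) | c * (QuotientGroup.mk (gen i) : Gk k ⧸ K) = d}.ncard

/-- there is a nonzero `K`-periodic solution `φ` of the Schrödinger
equation `∑_{y ∈ S(x)} φ(y) = (E - ε v(x)) φ(x)` (equivalently a nonzero function `ψ`
on the cosets) iff the matrix `M_{ij} = q_{ij} - δ_{ij}(E - ε v_i)` is singular. -/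
theorem stmt12 (k : ℕ) (K : Subgroup (Gk k)) [K.Normal] [K.FiniteIndex]
    [Fintype (Gk k ⧸ K)] [DecidableEq (Gk k ⧸ K)]
    (v : Gk k ⧸ K → ℝ) (ε : ℝ) (E : ℂ) :
    (∃ ψ : Gk k ⧸ K → ℂ, ψ ≠ 0 ∧ ∀ x : Gk k,
        ∑ i : Fin (k + 1), ψ (QuotientGroup.mk (x * gen i)) =
          (E - (ε : ℂ) * (v (QuotientGroup.mk x) : ℂ)) * ψ (QuotientGroup.mk x)) ↔
    Matrix.det (Matrix.of fun c d : Gk k ⧸ K =>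
        (q k K c d : ℂ) - (if c = d then E - (ε : ℂ) * (v c : ℂ) else 0)) = 0 := by
  classical
  rw [← Matrix.exists_mulVec_eq_zero_iff]
  apply exists_congr; intro ψ
  apply and_congr_right; intro _
  have hq : ∀ c d : Gk k ⧸ K, (q k K c d : ℂ) =
      ((Finset.univ.filter
        (fun i : Fin (k + 1) => c * (QuotientGroup.mk (gen i) : Gk k ⧸ K) = d)).card : ℂ) := by
    intro c d
    rw [q, Set.ncard_eq_toFinset_card', Set.toFinset_setOf]
  have hsum : ∀ c : Gk k ⧸ K,
      ∑ i : Fin (k + 1), ψ (c * (QuotientGroup.mk (gen i) : Gk k ⧸ K)) =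
        ∑ d : Gk k ⧸ K, (q k K c d : ℂ) * ψ d := by
    intro c
    rw [← Finset.sum_fiberwise Finset.univ
      (fun i : Fin (k + 1) => c * (QuotientGroup.mk (gen i) : Gk k ⧸ K))
      (fun i => ψ (c * (QuotientGroup.mk (gen i) : Gk k ⧸ K)))]
    refine Finset.sum_congr rfl fun d _ => ?_
    rw [hq, Finset.sum_congr rfl (fun i hi => by
      rw [(Finset.mem_filter.mp hi).2]), Finset.sum_const, nsmul_eq_mul]
  have hmv : ∀ c : Gk k ⧸ K,
      (Matrix.of fun c d : Gk k ⧸ K =>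
        (q k K c d : ℂ) - (if c = d then E - (ε : ℂ) * (v c : ℂ) else 0)).mulVec ψ c =
      (∑ d : Gk k ⧸ K, (q k K c d : ℂ) * ψ d) - (E - (ε : ℂ) * (v c : ℂ)) * ψ c := by
    intro c
    simp only [Matrix.mulVec, dotProduct, Matrix.of_apply, sub_mul,
      Finset.sum_sub_distrib, ite_mul, zero_mul, Finset.sum_ite_eq, Finset.mem_univ, if_true]
  constructor
  · intro h
    funext c
    obtain ⟨x, rfl⟩ := QuotientGroup.mk_surjective c
    have hx := h x
    simp only [QuotientGroup.mk_mul] at hx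
    rw [Pi.zero_apply, hmv, ← hsum, hx, sub_self]
  · intro h x
    have hc := congrFun h (QuotientGroup.mk x)
    rw [Pi.zero_apply, hmv, sub_eq_zero, ← hsum] at hc
    simpa only [QuotientGroup.mk_mul] using hc
end
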